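/- For every R > 0 there exists a constant C = C(R) > 0, independent of ε, such that for all ε ∈ (0,1] and all X ∈ ℝⁿ with ‖X‖ ≤ R, the graph maps satisfy ‖hᵋ(X) − h⁰(X)‖ ≤ C ε, where hᵋ(X) := Ȳᵋ(0) and h⁰(X) := Ȳ_X(0). (That is, hᵋ(X) = h⁰(X) + O(ε) as ε → 0, uniformly for X in bounded subsets of ℝⁿ.) -/

import Mathlib

/-!
Uniformly in `ε`, the gap condition `Lf / α + Lg / (-β) < 1` turns the Lyapunov–Perron equations
into a bound on `sup_{t ≤ 0} ‖(X̄ᵋ, Ȳᵋ)(t)‖` that depends only on `R`. Then `F` is bounded along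
the solution, so the slow component drifts at speed `O(ε)`: `‖X̄ᵋ(t) - X‖ ≤ ε K (-t)`. The defect
`Ȳᵋ - Ȳ_X` solves the fast integral equation forced by this drift through `G`; in the weighted
sup norm `sup_{t ≤ 0} e^{ν t} ‖Ȳᵋ(t) - Ȳ_X(t)‖` with `0 < ν < -β - Lg` the linear growth of the
forcing is absorbed, the equation becomes a contraction, and the defect at `t = 0` is `O(ε)`.
-/

open MeasureTheory Set

noncomputable section

abbrev Euc (k : ℕ) := EuclideanSpace ℝ (Fin k)

def expOp {k : ℕ} (A : Euc k →L[ℝ] Euc k) (t : ℝ) : Euc k →L[ℝ] Euc k :=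
  NormedSpace.exp (t • A)

/-- Membership in the space `C⁻_ρ`. -/
def memCm (ρ : ℝ) {E : Type*} [NormedAddCommGroup E] (u : ℝ → E) : Prop :=
  ContinuousOn u (Set.Iic 0) ∧ ∃ C : ℝ, ∀ t ≤ (0:ℝ), Real.exp (-ρ * t) * ‖u t‖ ≤ C

/-- The norm `‖u‖_ρ` of `C⁻_ρ`. -/
def nrm (ρ : ℝ) {E : Type*} [NormedAddCommGroup E] (u : ℝ → E) : ℝ :=
  ⨆ t : Set.Iic (0:ℝ), Real.exp (-ρ * (t : ℝ)) * ‖u t‖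

theorem forall_le_div_of_forall_le_imp {ι : Type*} {s : Set ι} {w : ι → ℝ} (hs : s.Nonempty)
    (hw : BddAbove (w '' s)) {c q : ℝ} (hq : q < 1)
    (h : ∀ S, (∀ i ∈ s, w i ≤ S) → ∀ i ∈ s, w i ≤ c + q * S) :
    ∀ i ∈ s, w i ≤ c / (1 - q) := by
  have hle : ∀ i ∈ s, w i ≤ sSup (w '' s) := fun i hi => le_csSup hw (mem_image_of_mem w hi)
  have hsup : sSup (w '' s) ≤ c + q * sSup (w '' s) :=
    csSup_le (hs.image w) (forall_mem_image.2 (h _ hle))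
  intro i hi
  rw [le_div_iff₀ (by linarith)]
  nlinarith [hle i hi]

theorem LipschitzWith.norm_le_norm_zero_add {E F : Type*} [SeminormedAddCommGroup E]
    [SeminormedAddCommGroup F] {K : NNReal} {f : E → F} (hf : LipschitzWith K f) (x : E) :
    ‖f x‖ ≤ ‖f 0‖ + K * ‖x‖ := by
  have := hf.dist_le_mul x 0
  rw [dist_eq_norm, dist_zero_right] at this
  linarith [norm_sub_norm_le (f x) (f 0)]

theorem LipschitzWith.norm_sub_le_mul_add {E₁ E₂ F : Type*} [SeminormedAddCommGroup E₁]
    [SeminormedAddCommGroup E₂] [SeminormedAddCommGroup F] {K : NNReal} {g : E₁ × E₂ → F}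
    (hg : LipschitzWith K g) {p q : E₁ × E₂} {a b : ℝ} (ha : ‖p.1 - q.1‖ ≤ a)
    (hb : ‖p.2 - q.2‖ ≤ b) : ‖g p - g q‖ ≤ K * (a + b) := by
  rw [← dist_eq_norm]
  refine (hg.dist_le_mul p q).trans (mul_le_mul_of_nonneg_left ?_ K.coe_nonneg)
  rw [dist_eq_norm, norm_prod_le_iff, Prod.fst_sub, Prod.snd_sub]
  constructor <;> linarith [norm_nonneg (p.1 - q.1), norm_nonneg (p.2 - q.2)]

theorem mul_neg_le_div_mul_exp {ν δ : ℝ} (hν : 0 < ν) (hδ : 0 ≤ δ) (s : ℝ) :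
    δ * (-s) ≤ δ / ν * Real.exp (-ν * s) := by
  rw [div_mul_eq_mul_div, le_div_iff₀ hν]
  nlinarith [Real.add_one_le_exp (-ν * s)]

theorem exp_mul_sub_eq (c t σ : ℝ) :
    Real.exp (c * (t - σ)) = Real.exp (c * t) * Real.exp (-c * σ) := by
  rw [← Real.exp_add]; ring_nf

theorem integrableOn_exp_mul_sub_Ioi {c : ℝ} (hc : 0 < c) (t : ℝ) :
    IntegrableOn (fun σ => Real.exp (c * (t - σ))) (Ioi t) := by
  have h := (integrableOn_exp_mul_Ioi (neg_lt_zero.2 hc) t).const_mul (Real.exp (c * t))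
  simp only [← exp_mul_sub_eq] at h
  exact h

theorem integral_exp_mul_sub_Ioi {c : ℝ} (hc : 0 < c) (t : ℝ) :
    ∫ σ in Ioi t, Real.exp (c * (t - σ)) = 1 / c := by
  simp only [exp_mul_sub_eq]
  rw [integral_const_mul, integral_exp_mul_Ioi (neg_lt_zero.2 hc), mul_div_assoc', mul_neg,
    ← Real.exp_add]
  field_simp
  simp

section ExpOp

variable {k : ℕ} (A : Euc k →L[ℝ] Euc k)

theorem hasDerivAt_expOp_apply (x : Euc k) (t : ℝ) :
    HasDerivAt (fun τ => expOp A τ x) (expOp A t (A x)) t := by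
  simpa [expOp] using (hasDerivAt_exp_smul_const A t).clm_apply (hasDerivAt_const t x)

theorem continuous_expOp : Continuous (expOp A) :=
  continuous_iff_continuousAt.2 fun t => (hasDerivAt_exp_smul_const A t).continuousAt

theorem expOp_zero_apply (x : Euc k) : expOp A 0 x = x := by
  rw [expOp, show (0:ℝ) • A = 0 from zero_smul ℝ A, NormedSpace.exp_zero]
  rfl

end ExpOp

section Slow

variable {n : ℕ} {A : Euc n →L[ℝ] Euc n} {α : ℝ}
  (hA : ∀ t ≤ (0:ℝ), ∀ x : Euc n, ‖expOp A t x‖ ≤ Real.exp (α * t) * ‖x‖)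
include hA

theorem norm_expOp_apply_le (hα : 0 ≤ α) {t : ℝ} (ht : t ≤ 0) (x : Euc n) :
    ‖expOp A t x‖ ≤ ‖x‖ :=
  (hA t ht x).trans (mul_le_of_le_one_left (norm_nonneg x)
    (Real.exp_le_one_iff.2 (mul_nonpos_of_nonneg_of_nonpos hα ht)))

theorem norm_expOp_apply_sub_self_le (hα : 0 ≤ α) {r : ℝ} (hr : r ≤ 0) (x : Euc n) :
    ‖expOp A r x - x‖ ≤ ‖A‖ * ‖x‖ * (-r) := by
  have hderiv : ∀ τ ∈ Icc r (0:ℝ), HasDerivWithinAt (fun τ => expOp A τ x)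
      (expOp A τ (A x)) (Icc r 0) τ := fun τ _ => (hasDerivAt_expOp_apply A x τ).hasDerivWithinAt
  have hbound : ∀ τ ∈ Icc r (0:ℝ), ‖expOp A τ (A x)‖ ≤ ‖A‖ * ‖x‖ := fun τ hτ =>
    (norm_expOp_apply_le hA hα hτ.2 (A x)).trans (A.le_opNorm x)
  have := (convex_Icc r 0).norm_image_sub_le_of_norm_hasDerivWithin_le hderiv hbound
    (left_mem_Icc.2 hr) (right_mem_Icc.2 hr)
  rwa [expOp_zero_apply, norm_sub_rev, zero_sub, norm_neg, Real.norm_of_nonpos hr] at this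

theorem norm_integral_expOp_le_mul (hα : 0 ≤ α) {ε t b : ℝ} (hε : 0 ≤ ε) (ht : t ≤ 0)
    {f : ℝ → Euc n} (hf : ∀ σ ∈ Ioc t 0, ‖f σ‖ ≤ b) :
    ‖∫ σ in (0:ℝ)..t, expOp A (ε * (t - σ)) (f σ)‖ ≤ b * (-t) := by
  have := intervalIntegral.norm_integral_le_of_norm_le_const (a := 0) (b := t)
    (f := fun σ => expOp A (ε * (t - σ)) (f σ)) (C := b) fun σ hσ => by
      rw [uIoc_of_ge ht] at hσ
      exact (norm_expOp_apply_le hA hα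
        (mul_nonpos_of_nonneg_of_nonpos hε (by linarith [hσ.1])) _).trans (hf σ hσ)
  rwa [sub_zero, abs_of_nonpos ht] at this

theorem norm_smul_integral_expOp_le_div (hα : 0 < α) {ε t b : ℝ} (hε : 0 < ε) (ht : t ≤ 0)
    (hb : 0 ≤ b) {f : ℝ → Euc n} (hf : ∀ σ ∈ Ioc t 0, ‖f σ‖ ≤ b) :
    ‖ε • ∫ σ in (0:ℝ)..t, expOp A (ε * (t - σ)) (f σ)‖ ≤ b / α := by
  have hαε : 0 < α * ε := mul_pos hα hε
  have hg : IntegrableOn (fun σ => b * Real.exp (α * ε * (t - σ))) (Ioi t) :=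
    (integrableOn_exp_mul_sub_Ioi hαε t).const_mul b
  have hpt : ∀ σ ∈ Ioc t 0,
      ‖expOp A (ε * (t - σ)) (f σ)‖ ≤ b * Real.exp (α * ε * (t - σ)) := fun σ hσ => by
    have hts : ε * (t - σ) ≤ 0 := mul_nonpos_of_nonneg_of_nonpos hε.le (by linarith [hσ.1])
    rw [mul_comm b, mul_assoc]
    exact (hA _ hts _).trans (mul_le_mul_of_nonneg_left (hf σ hσ) (Real.exp_pos _).le)
  have hint : ‖∫ σ in (0:ℝ)..t, expOp A (ε * (t - σ)) (f σ)‖ ≤ b / (α * ε) :=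
    calc ‖∫ σ in (0:ℝ)..t, expOp A (ε * (t - σ)) (f σ)‖
        ≤ ∫ σ in Ioc t 0, ‖expOp A (ε * (t - σ)) (f σ)‖ := by
          simpa only [uIoc_of_ge ht] using intervalIntegral.norm_integral_le_integral_norm_uIoc
            (a := 0) (b := t) (f := fun σ => expOp A (ε * (t - σ)) (f σ)) (μ := volume)
      _ ≤ ∫ σ in Ioc t 0, b * Real.exp (α * ε * (t - σ)) :=
          integral_mono_of_nonneg (Filter.Eventually.of_forall fun _ => norm_nonneg _)
            (hg.mono_set Ioc_subset_Ioi_self) ((ae_restrict_iff' measurableSet_Ioc).2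
              (Filter.Eventually.of_forall hpt))
      _ ≤ ∫ σ in Ioi t, b * Real.exp (α * ε * (t - σ)) :=
          setIntegral_mono_set hg (Filter.Eventually.of_forall fun _ => by positivity)
            Ioc_subset_Ioi_self.eventuallyLE
      _ = b / (α * ε) := by
          rw [integral_const_mul, integral_exp_mul_sub_Ioi hαε, mul_one_div]
  rw [norm_smul, Real.norm_of_nonneg hε.le]
  calc ε * ‖∫ σ in (0:ℝ)..t, expOp A (ε * (t - σ)) (f σ)‖ ≤ ε * (b / (α * ε)) := by gcongr
    _ = b / α := by field_simp

theorem norm_expOp_add_smul_integral_le (hα : 0 < α) {ε t b : ℝ} (hε : 0 < ε) (ht : t ≤ 0)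
    (hb : 0 ≤ b) (X₀ : Euc n) {f : ℝ → Euc n} (hf : ∀ σ ∈ Ioc t 0, ‖f σ‖ ≤ b) :
    ‖expOp A (ε * t) X₀ + ε • ∫ σ in (0:ℝ)..t, expOp A (ε * (t - σ)) (f σ)‖ ≤ ‖X₀‖ + b / α :=
  (norm_add_le _ _).trans (add_le_add
    (norm_expOp_apply_le hA hα.le (mul_nonpos_of_nonneg_of_nonpos hε.le ht) X₀)
    (norm_smul_integral_expOp_le_div hA hα hε ht hb hf))

theorem norm_expOp_add_smul_integral_sub_le (hα : 0 ≤ α) {ε t b : ℝ} (hε : 0 ≤ ε) (ht : t ≤ 0)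
    (X₀ : Euc n) {f : ℝ → Euc n} (hf : ∀ σ ∈ Ioc t 0, ‖f σ‖ ≤ b) :
    ‖(expOp A (ε * t) X₀ + ε • ∫ σ in (0:ℝ)..t, expOp A (ε * (t - σ)) (f σ)) - X₀‖
      ≤ ε * (‖A‖ * ‖X₀‖ + b) * (-t) := by
  rw [add_sub_right_comm]
  calc ‖expOp A (ε * t) X₀ - X₀ + ε • ∫ σ in (0:ℝ)..t, expOp A (ε * (t - σ)) (f σ)‖
        ≤ ‖expOp A (ε * t) X₀ - X₀‖ + ε * ‖∫ σ in (0:ℝ)..t, expOp A (ε * (t - σ)) (f σ)‖ :=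
        (norm_add_le _ _).trans_eq (by rw [norm_smul, Real.norm_of_nonneg hε])
    _ ≤ ‖A‖ * ‖X₀‖ * (-(ε * t)) + ε * (b * (-t)) := by
        gcongr
        · exact norm_expOp_apply_sub_self_le hA hα (mul_nonpos_of_nonneg_of_nonpos hε ht) X₀
        · exact norm_integral_expOp_le_mul hA hα hε ht hf
    _ = ε * (‖A‖ * ‖X₀‖ + b) * (-t) := by ring

end Slow

section Fast

variable {m : ℕ} {B : Euc m →L[ℝ] Euc m} {β : ℝ}
  (hB : ∀ t ≥ (0:ℝ), ∀ y : Euc m, ‖expOp B t y‖ ≤ Real.exp (β * t) * ‖y‖)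
include hB

theorem norm_expOp_apply_le_of_le_mul_exp {ν c s t : ℝ} (hst : s ≤ t) {y : Euc m}
    (hy : ‖y‖ ≤ c * Real.exp (-ν * s)) :
    ‖expOp B (t - s) y‖ ≤ c * Real.exp (β * t) * Real.exp ((-β - ν) * s) :=
  calc ‖expOp B (t - s) y‖ ≤ Real.exp (β * (t - s)) * (c * Real.exp (-ν * s)) :=
        (hB _ (sub_nonneg.2 hst) y).trans (mul_le_mul_of_nonneg_left hy (Real.exp_pos _).le)
    _ = c * Real.exp (β * t) * Real.exp ((-β - ν) * s) := by
        rw [mul_left_comm, ← Real.exp_add, mul_assoc, ← Real.exp_add]; ring_nf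

theorem norm_integral_Iic_expOp_le {ν c t : ℝ} (hν : ν < -β) {v : ℝ → Euc m}
    (hv : ∀ s ≤ t, ‖v s‖ ≤ c * Real.exp (-ν * s)) :
    ‖∫ s in Iic t, expOp B (t - s) (v s)‖ ≤ c * Real.exp (-ν * t) / (-β - ν) := by
  have hκ : 0 < -β - ν := by linarith
  calc ‖∫ s in Iic t, expOp B (t - s) (v s)‖ ≤ ∫ s in Iic t, ‖expOp B (t - s) (v s)‖ :=
        norm_integral_le_integral_norm _
    _ ≤ ∫ s in Iic t, c * Real.exp (β * t) * Real.exp ((-β - ν) * s) :=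
        integral_mono_of_nonneg (Filter.Eventually.of_forall fun _ => norm_nonneg _)
          ((integrableOn_exp_mul_Iic hκ t).const_mul _)
          ((ae_restrict_iff' measurableSet_Iic).2 (Filter.Eventually.of_forall fun s hs =>
            norm_expOp_apply_le_of_le_mul_exp hB hs (hv s hs)))
    _ = c * Real.exp (-ν * t) / (-β - ν) := by
        rw [integral_const_mul, integral_exp_mul_Iic hκ, mul_assoc, mul_div_assoc',
          ← Real.exp_add]
        ring_nf

theorem integrableOn_Iic_expOp (hβ : β < 0) {c t : ℝ} {v : ℝ → Euc m}
    (hvc : ContinuousOn v (Iic t)) (hv : ∀ s ≤ t, ‖v s‖ ≤ c) :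
    IntegrableOn (fun s => expOp B (t - s) (v s)) (Iic t) := by
  refine Integrable.mono'
    ((integrableOn_exp_mul_Iic (neg_pos.2 hβ) t).const_mul (c * Real.exp (β * t)))
    (((continuous_expOp B).comp (continuous_const.sub continuous_id)).continuousOn.clm_apply hvc
      |>.aestronglyMeasurable measurableSet_Iic)
    ((ae_restrict_iff' measurableSet_Iic).2 (Filter.Eventually.of_forall fun s hs => ?_))
  simpa using norm_expOp_apply_le_of_le_mul_exp hB (ν := 0) hs (by simpa using hv s hs)

end Fast

theorem memCm.exists_norm_le {E : Type*} [NormedAddCommGroup E] {ρ : ℝ} {u : ℝ → E}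
    (hρ : 0 ≤ ρ) (hu : memCm ρ u) : ∃ C, ∀ t ≤ (0:ℝ), ‖u t‖ ≤ C := by
  obtain ⟨C, hC⟩ := hu.2
  exact ⟨C, fun t ht => (le_mul_of_one_le_left (norm_nonneg _)
    (Real.one_le_exp (by nlinarith))).trans (hC t ht)⟩

theorem norm_apply_le_of_lipschitzWith {E₁ E₂ E : Type*} [SeminormedAddCommGroup E₁]
    [SeminormedAddCommGroup E₂] [SeminormedAddCommGroup E] {L : NNReal} {M P : ℝ}
    {F : E₁ → E₂ → ℝ → E} (hFl : ∀ t : ℝ, LipschitzWith L fun p : E₁ × E₂ => F p.1 p.2 t)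
    (hF0 : ∀ t ≤ (0:ℝ), ‖F 0 0 t‖ ≤ M) {p : ℝ → E₁ × E₂} (hp : ∀ t ≤ (0:ℝ), ‖p t‖ ≤ P) :
    ∀ t ≤ (0:ℝ), ‖F (p t).1 (p t).2 t‖ ≤ M + L * P := fun t ht =>
  ((hFl t).norm_le_norm_zero_add (p t)).trans
    (add_le_add (hF0 t ht) (mul_le_mul_of_nonneg_left (hp t ht) L.coe_nonneg))

section LyapunovPerron

variable {n m : ℕ} {A : Euc n →L[ℝ] Euc n} {B : Euc m →L[ℝ] Euc m} {α β : ℝ}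
  {F : Euc n → Euc m → ℝ → Euc n} {G : Euc n → Euc m → ℝ → Euc m} {Lf Lg : NNReal} {M : ℝ}

theorem norm_le_of_lyapunovPerron (hα : 0 < α) (hβ : β < 0)
    (hA : ∀ t ≤ (0:ℝ), ∀ x : Euc n, ‖expOp A t x‖ ≤ Real.exp (α * t) * ‖x‖)
    (hB : ∀ t ≥ (0:ℝ), ∀ y : Euc m, ‖expOp B t y‖ ≤ Real.exp (β * t) * ‖y‖)
    (hFl : ∀ t : ℝ, LipschitzWith Lf fun p : Euc n × Euc m => F p.1 p.2 t)
    (hGl : ∀ t : ℝ, LipschitzWith Lg fun p : Euc n × Euc m => G p.1 p.2 t)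
    (hF0 : ∀ t ≤ (0:ℝ), ‖F 0 0 t‖ ≤ M) (hG0 : ∀ t ≤ (0:ℝ), ‖G 0 0 t‖ ≤ M)
    (hθ : (Lf : ℝ) / α + Lg / (-β) < 1) {ε R : ℝ} (hε : 0 < ε) {X₀ : Euc n} (hX₀ : ‖X₀‖ ≤ R)
    {u : ℝ → Euc n × Euc m} (hub : ∃ C, ∀ t ≤ (0:ℝ), ‖u t‖ ≤ C)
    (hu : ∀ t ≤ (0:ℝ),
      (u t).1 = expOp A (ε * t) X₀ + ε • ∫ s in (0:ℝ)..t,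
        expOp A (ε * (t - s)) (F (u s).1 (u s).2 s) ∧
      (u t).2 = ∫ s in Set.Iic t, expOp B (t - s) (G (u s).1 (u s).2 s)) :
    ∀ t ≤ (0:ℝ), ‖u t‖ ≤ (R + M / α + M / (-β)) / (1 - ((Lf : ℝ) / α + Lg / (-β))) := by
  obtain ⟨C, hC⟩ := hub
  have hM : 0 ≤ M := (norm_nonneg _).trans (hF0 0 le_rfl)
  refine forall_le_div_of_forall_le_imp (w := fun t => ‖u t‖) nonempty_Iic
    ⟨C, forall_mem_image.2 hC⟩ hθ fun S hS t ht => ?_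
  have hS0 : 0 ≤ S := (norm_nonneg _).trans (hS 0 self_mem_Iic)
  have hF := norm_apply_le_of_lipschitzWith hFl hF0 hS
  have hG := norm_apply_le_of_lipschitzWith hGl hG0 hS
  have hfst : ‖(u t).1‖ ≤ R + (M + Lf * S) / α := by
    rw [(hu t ht).1]
    exact (norm_expOp_add_smul_integral_le hA hα hε ht (by positivity) X₀
      fun σ hσ => hF σ hσ.2).trans (by linarith)
  have hsnd : ‖(u t).2‖ ≤ (M + Lg * S) / (-β) := by
    rw [(hu t ht).2]
    simpa using norm_integral_Iic_expOp_le hB (ν := 0) (by linarith)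
      fun s hs => by simpa using hG s (hs.trans ht)
  have hMβ : 0 ≤ M / (-β) := div_nonneg hM (by linarith)
  have hLgβ : 0 ≤ (Lg : ℝ) / (-β) * S := mul_nonneg (div_nonneg Lg.coe_nonneg (by linarith)) hS0
  have hfst' : ‖(u t).1‖ ≤ R + M / α + Lf / α * S := hfst.trans_eq (by ring)
  have hsnd' : ‖(u t).2‖ ≤ M / (-β) + Lg / (-β) * S := hsnd.trans_eq (by ring)
  refine norm_prod_le_iff.2 ⟨hfst'.trans ?_, hsnd'.trans ?_⟩
  · linarith
  · linarith [norm_nonneg X₀, hX₀, div_nonneg hM hα.le,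
      mul_nonneg (div_nonneg Lf.coe_nonneg hα.le) hS0]

theorem norm_fst_sub_le_of_lyapunovPerron (hα : 0 ≤ α)
    (hA : ∀ t ≤ (0:ℝ), ∀ x : Euc n, ‖expOp A t x‖ ≤ Real.exp (α * t) * ‖x‖)
    (hFl : ∀ t : ℝ, LipschitzWith Lf fun p : Euc n × Euc m => F p.1 p.2 t)
    (hF0 : ∀ t ≤ (0:ℝ), ‖F 0 0 t‖ ≤ M) {ε R P : ℝ} (hε : 0 ≤ ε) {X₀ : Euc n} (hX₀ : ‖X₀‖ ≤ R)
    {u : ℝ → Euc n × Euc m} (hub : ∀ t ≤ (0:ℝ), ‖u t‖ ≤ P)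
    (hu : ∀ t ≤ (0:ℝ), (u t).1 = expOp A (ε * t) X₀ + ε • ∫ s in (0:ℝ)..t,
        expOp A (ε * (t - s)) (F (u s).1 (u s).2 s)) :
    ∀ t ≤ (0:ℝ), ‖(u t).1 - X₀‖ ≤ ε * (‖A‖ * R + (M + Lf * P)) * (-t) := fun t ht => by
  rw [hu t ht]
  refine (norm_expOp_add_smul_integral_sub_le hA hα hε ht X₀
    fun σ hσ => norm_apply_le_of_lipschitzWith hFl hF0 hub σ hσ.2).trans ?_
  have : ‖A‖ * ‖X₀‖ ≤ ‖A‖ * R := mul_le_mul_of_nonneg_left hX₀ (norm_nonneg A)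
  have : 0 ≤ -t := by linarith
  gcongr

theorem integrableOn_Iic_expOp_comp (hβ : β < 0)
    (hB : ∀ t ≥ (0:ℝ), ∀ y : Euc m, ‖expOp B t y‖ ≤ Real.exp (β * t) * ‖y‖)
    (hGc : Continuous fun p : Euc n × Euc m × ℝ => G p.1 p.2.1 p.2.2)
    (hGl : ∀ t : ℝ, LipschitzWith Lg fun p : Euc n × Euc m => G p.1 p.2 t)
    (hG0 : ∀ t ≤ (0:ℝ), ‖G 0 0 t‖ ≤ M) {p : ℝ → Euc n × Euc m} {P : ℝ}
    (hpc : ContinuousOn p (Iic 0)) (hpb : ∀ t ≤ (0:ℝ), ‖p t‖ ≤ P) {t : ℝ} (ht : t ≤ 0) :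
    IntegrableOn (fun s => expOp B (t - s) (G (p s).1 (p s).2 s)) (Iic t) :=
  integrableOn_Iic_expOp hB hβ
    ((hGc.comp_continuousOn (hpc.fst.prodMk (hpc.snd.prodMk continuousOn_id))).mono
      (Iic_subset_Iic.2 ht))
    fun s hs => norm_apply_le_of_lipschitzWith hGl hG0 hpb s (hs.trans ht)

theorem exp_mul_norm_snd_sub_le (hβ : β < 0)
    (hB : ∀ t ≥ (0:ℝ), ∀ y : Euc m, ‖expOp B t y‖ ≤ Real.exp (β * t) * ‖y‖)
    (hGc : Continuous fun p : Euc n × Euc m × ℝ => G p.1 p.2.1 p.2.2)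
    (hGl : ∀ t : ℝ, LipschitzWith Lg fun p : Euc n × Euc m => G p.1 p.2 t)
    (hG0 : ∀ t ≤ (0:ℝ), ‖G 0 0 t‖ ≤ M) {ν δ P K S : ℝ} (hν : 0 < ν) (hνβ : ν < -β)
    (hδ : 0 ≤ δ) {X₀ : Euc n} {u : ℝ → Euc n × Euc m} {Ybar : ℝ → Euc m}
    (huc : ContinuousOn u (Iic 0)) (hub : ∀ t ≤ (0:ℝ), ‖u t‖ ≤ P)
    (hYc : ContinuousOn Ybar (Iic 0)) (hYb : ∀ t ≤ (0:ℝ), ‖Ybar t‖ ≤ K)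
    (hu : ∀ t ≤ (0:ℝ), (u t).2 = ∫ s in Iic t, expOp B (t - s) (G (u s).1 (u s).2 s))
    (hY : ∀ t ≤ (0:ℝ), Ybar t = ∫ s in Iic t, expOp B (t - s) (G X₀ (Ybar s) s))
    (hdrift : ∀ t ≤ (0:ℝ), ‖(u t).1 - X₀‖ ≤ δ * (-t))
    (hS : ∀ t ≤ (0:ℝ), Real.exp (ν * t) * ‖(u t).2 - Ybar t‖ ≤ S) {t : ℝ} (ht : t ≤ 0) :
    Real.exp (ν * t) * ‖(u t).2 - Ybar t‖ ≤ Lg * (δ / ν + S) / (-β - ν) := by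
  have hS0 : 0 ≤ S := (mul_nonneg (Real.exp_pos _).le (norm_nonneg _)).trans (hS 0 le_rfl)
  have hG : ∀ s ≤ t,
      ‖G (u s).1 (u s).2 s - G X₀ (Ybar s) s‖ ≤ Lg * (δ / ν + S) * Real.exp (-ν * s) := by
    intro s hs
    have hy : ‖(u s).2 - Ybar s‖ ≤ S * Real.exp (-ν * s) := by
      rw [neg_mul, Real.exp_neg, ← div_eq_mul_inv, le_div_iff₀' (Real.exp_pos _)]
      exact hS s (hs.trans ht)
    refine ((hGl s).norm_sub_le_mul_add (p := u s) (q := (X₀, Ybar s))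
      ((hdrift s (hs.trans ht)).trans (mul_neg_le_div_mul_exp hν hδ s)) hy).trans_eq ?_
    ring
  have hdiff : (u t).2 - Ybar t
      = ∫ s in Iic t, expOp B (t - s) (G (u s).1 (u s).2 s - G X₀ (Ybar s) s) := by
    rw [hu t ht, hY t ht, ← integral_sub
      (integrableOn_Iic_expOp_comp hβ hB hGc hGl hG0 huc hub ht)
      (integrableOn_Iic_expOp_comp hβ hB hGc hGl hG0 (p := fun s => (X₀, Ybar s))
        (continuousOn_const.prodMk hYc) (fun s hs => norm_prod_le_iff.2
          ⟨le_max_left ‖X₀‖ K, (hYb s hs).trans (le_max_right ‖X₀‖ K)⟩) ht)]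
    simp only [map_sub]
  have hbound := norm_integral_Iic_expOp_le hB hνβ hG
  rw [← hdiff] at hbound
  have hexp : Real.exp (ν * t) * Real.exp (-ν * t) = 1 := by
    rw [← Real.exp_add]; simp
  calc Real.exp (ν * t) * ‖(u t).2 - Ybar t‖
      ≤ Real.exp (ν * t) * (Lg * (δ / ν + S) * Real.exp (-ν * t) / (-β - ν)) := by gcongr
    _ = Lg * (δ / ν + S) / (-β - ν) * (Real.exp (ν * t) * Real.exp (-ν * t)) := by ring
    _ = Lg * (δ / ν + S) / (-β - ν) := by rw [hexp, mul_one]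

theorem norm_snd_sub_le_of_drift (hβ : β < 0)
    (hB : ∀ t ≥ (0:ℝ), ∀ y : Euc m, ‖expOp B t y‖ ≤ Real.exp (β * t) * ‖y‖)
    (hGc : Continuous fun p : Euc n × Euc m × ℝ => G p.1 p.2.1 p.2.2)
    (hGl : ∀ t : ℝ, LipschitzWith Lg fun p : Euc n × Euc m => G p.1 p.2 t)
    (hG0 : ∀ t ≤ (0:ℝ), ‖G 0 0 t‖ ≤ M) {ν δ P K : ℝ} (hν : 0 < ν) (hνL : ν + Lg < -β)
    (hδ : 0 ≤ δ) {X₀ : Euc n} {u : ℝ → Euc n × Euc m} {Ybar : ℝ → Euc m}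
    (huc : ContinuousOn u (Iic 0)) (hub : ∀ t ≤ (0:ℝ), ‖u t‖ ≤ P)
    (hYc : ContinuousOn Ybar (Iic 0)) (hYb : ∀ t ≤ (0:ℝ), ‖Ybar t‖ ≤ K)
    (hu : ∀ t ≤ (0:ℝ), (u t).2 = ∫ s in Iic t, expOp B (t - s) (G (u s).1 (u s).2 s))
    (hY : ∀ t ≤ (0:ℝ), Ybar t = ∫ s in Iic t, expOp B (t - s) (G X₀ (Ybar s) s))
    (hdrift : ∀ t ≤ (0:ℝ), ‖(u t).1 - X₀‖ ≤ δ * (-t)) :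
    ‖(u 0).2 - Ybar 0‖ ≤ Lg * δ / (ν * (-β - ν - Lg)) := by
  have hκ : 0 < -β - ν := by linarith [Lg.coe_nonneg]
  have hbdd : BddAbove ((fun t => Real.exp (ν * t) * ‖(u t).2 - Ybar t‖) '' Iic 0) :=
    ⟨P + K, forall_mem_image.2 fun t ht =>
      (mul_le_of_le_one_left (norm_nonneg _) (Real.exp_le_one_iff.2 (by nlinarith [mem_Iic.1 ht])))
        |>.trans ((norm_sub_le _ _).trans
          (add_le_add ((norm_snd_le _).trans (hub t ht)) (hYb t ht)))⟩
  have key := forall_le_div_of_forall_le_imp nonempty_Iic hbdd (c := Lg * (δ / ν) / (-β - ν))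
    ((div_lt_one hκ).2 (by linarith : (Lg : ℝ) < -β - ν)) (fun S hS t ht =>
      (exp_mul_norm_snd_sub_le hβ hB hGc hGl hG0 hν (by linarith [Lg.coe_nonneg]) hδ huc hub hYc
        hYb hu hY hdrift hS ht).trans_eq (by ring)) 0 self_mem_Iic
  simp only [mul_zero, Real.exp_zero, one_mul] at key
  refine key.trans_eq ?_
  have : -β - ν - Lg ≠ 0 := by linarith
  field_simp

end LyapunovPerron

theorem graphMap_approximation_general
    {n m : ℕ} (A : Euc n →L[ℝ] Euc n) (B : Euc m →L[ℝ] Euc m)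
    (α β : ℝ) (hβ : β < 0)
    (hA : ∀ t ≤ (0:ℝ), ∀ x : Euc n, ‖expOp A t x‖ ≤ Real.exp (α * t) * ‖x‖)
    (hB : ∀ t ≥ (0:ℝ), ∀ y : Euc m, ‖expOp B t y‖ ≤ Real.exp (β * t) * ‖y‖)
    (F : Euc n → Euc m → ℝ → Euc n) (G : Euc n → Euc m → ℝ → Euc m)
    (Lf Lg : NNReal)
    (hGc : Continuous fun p : Euc n × Euc m × ℝ => G p.1 p.2.1 p.2.2)
    (hFl : ∀ t : ℝ, LipschitzWith Lf fun p : Euc n × Euc m => F p.1 p.2 t)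
    (hGl : ∀ t : ℝ, LipschitzWith Lg fun p : Euc n × Euc m => G p.1 p.2 t)
    (M : ℝ) (hM : ∀ t ≤ (0:ℝ), ‖F 0 0 t‖ + ‖G 0 0 t‖ ≤ M)
    (lam : ℝ) (hlam : 0 < lam)
    (hlamα : ∀ ε : ℝ, 0 < ε → ε ≤ 1 → ε * lam < α)
    (hgap : (Lf : ℝ) / (α - lam) + (Lg : ℝ) / (-β) < 1)
    : ∀ R > (0:ℝ), ∃ C > (0:ℝ), ∀ ε : ℝ, 0 < ε → ε ≤ 1 →
      ∀ X₀ : Euc n, ‖X₀‖ ≤ R →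
      ∀ u : ℝ → Euc n × Euc m, memCm (ε * lam) u →
        (∀ t ≤ (0:ℝ),
          (u t).1 = expOp A (ε * t) X₀ + ε • ∫ s in (0:ℝ)..t,
            expOp A (ε * (t - s)) (F (u s).1 (u s).2 s) ∧
          (u t).2 = ∫ s in Set.Iic t, expOp B (t - s) (G (u s).1 (u s).2 s)) →
        ∀ Ybar : ℝ → Euc m, ContinuousOn Ybar (Set.Iic 0) →
          (∃ K : ℝ, ∀ t ≤ (0:ℝ), ‖Ybar t‖ ≤ K) →
          (∀ t ≤ (0:ℝ), Ybar t = ∫ s in Set.Iic t, expOp B (t - s) (G X₀ (Ybar s) s)) →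
          ‖(u 0).2 - Ybar 0‖ ≤ C * ε := by
  intro R hR
  have hlamα' : lam < α := by simpa using hlamα 1 one_pos le_rfl
  have hα : 0 < α := hlam.trans hlamα'
  have hF0 : ∀ t ≤ (0:ℝ), ‖F 0 0 t‖ ≤ M := fun t ht => by linarith [hM t ht, norm_nonneg (G 0 0 t)]
  have hG0 : ∀ t ≤ (0:ℝ), ‖G 0 0 t‖ ≤ M := fun t ht => by linarith [hM t ht, norm_nonneg (F 0 0 t)]
  have hM0 : 0 ≤ M := (norm_nonneg _).trans (hF0 0 le_rfl)
  have hθ : (Lf : ℝ) / α + Lg / (-β) < 1 := lt_of_le_of_lt (by gcongr; linarith) hgap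
  have hLg : (Lg : ℝ) < -β := by
    rw [← div_lt_one (neg_pos.2 hβ)]; linarith [div_nonneg Lf.coe_nonneg hα.le]
  set P := (R + M / α + M / (-β)) / (1 - ((Lf : ℝ) / α + Lg / (-β)))
  set K := ‖A‖ * R + (M + Lf * P)
  set ν := (-β - Lg) / 2 with hν
  have hP : 0 ≤ P := div_nonneg (add_nonneg (add_nonneg hR.le (div_nonneg hM0 hα.le))
    (div_nonneg hM0 (neg_pos.2 hβ).le)) (by linarith)
  have hK : 0 ≤ K := add_nonneg (by positivity) (add_nonneg hM0 (mul_nonneg Lf.coe_nonneg hP))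
  have hν0 : 0 < ν := by linarith
  refine ⟨Lg * K / ν ^ 2 + 1, by positivity, ?_⟩
  intro ε hε _ X₀ hX₀ u hu hueq Ybar hYc ⟨K', hK'⟩ hYeq
  have hub := norm_le_of_lyapunovPerron hα hβ hA hB hFl hGl hF0 hG0 hθ hε hX₀
    (hu.exists_norm_le (mul_pos hε hlam).le) hueq
  have hdrift := norm_fst_sub_le_of_lyapunovPerron hα.le hA hFl hF0 hε.le hX₀ hub
    fun t ht => (hueq t ht).1
  calc ‖(u 0).2 - Ybar 0‖ ≤ Lg * (ε * K) / (ν * (-β - ν - Lg)) :=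
        norm_snd_sub_le_of_drift hβ hB hGc hGl hG0 hν0 (by linarith) (by positivity)
          hu.1 hub hYc hK' (fun t ht => (hueq t ht).2) hYeq hdrift
    _ ≤ (Lg * K / ν ^ 2 + 1) * ε := by
        rw [show -β - ν - Lg = ν by ring, show (Lg:ℝ) * (ε * K) / (ν * ν) = Lg * K / ν ^ 2 * ε by
          field_simp]
        linarith

/-- Uniformly for `‖X‖ ≤ R`, the graph maps satisfy
`‖hᵋ(X) - h⁰(X)‖ ≤ C ε` with `C = C(R)` independent of `ε ∈ (0,1]`; here `hᵋ(X) = Ȳᵋ(0)` comes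
from the slow-time Lyapunov–Perron fixed point and `h⁰(X) = Ȳ_X(0)` from the unique bounded
continuous solution of the frozen fast integral equation. -/
theorem graphMap_approximation
    {n m : ℕ} (A : Euc n →L[ℝ] Euc n) (B : Euc m →L[ℝ] Euc m)
    (α β : ℝ) (hα : 0 ≤ α) (hβ : β < 0)
    (hA : ∀ t ≤ (0:ℝ), ∀ x : Euc n, ‖expOp A t x‖ ≤ Real.exp (α * t) * ‖x‖)
    (hB : ∀ t ≥ (0:ℝ), ∀ y : Euc m, ‖expOp B t y‖ ≤ Real.exp (β * t) * ‖y‖)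
    (F : Euc n → Euc m → ℝ → Euc n) (G : Euc n → Euc m → ℝ → Euc m)
    (Lf Lg : NNReal)
    (hFc : Continuous fun p : Euc n × Euc m × ℝ => F p.1 p.2.1 p.2.2)
    (hGc : Continuous fun p : Euc n × Euc m × ℝ => G p.1 p.2.1 p.2.2)
    (hFl : ∀ t : ℝ, LipschitzWith Lf fun p : Euc n × Euc m => F p.1 p.2 t)
    (hGl : ∀ t : ℝ, LipschitzWith Lg fun p : Euc n × Euc m => G p.1 p.2 t)
    (M : ℝ) (hM : ∀ t ≤ (0:ℝ), ‖F 0 0 t‖ + ‖G 0 0 t‖ ≤ M)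
    (lam : ℝ) (hlam : 0 < lam)
    (hlamα : ∀ ε : ℝ, 0 < ε → ε ≤ 1 → ε * lam < α)
    (hgap : (Lf : ℝ) / (α - lam) + (Lg : ℝ) / (-β) < 1)
    : ∀ R > (0:ℝ), ∃ C > (0:ℝ), ∀ ε : ℝ, 0 < ε → ε ≤ 1 →
      ∀ X₀ : Euc n, ‖X₀‖ ≤ R →
      ∀ u : ℝ → Euc n × Euc m, memCm (ε * lam) u →
        (∀ t ≤ (0:ℝ),
          (u t).1 = expOp A (ε * t) X₀ + ε • ∫ s in (0:ℝ)..t,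
            expOp A (ε * (t - s)) (F (u s).1 (u s).2 s) ∧
          (u t).2 = ∫ s in Set.Iic t, expOp B (t - s) (G (u s).1 (u s).2 s)) →
        ∀ Ybar : ℝ → Euc m, ContinuousOn Ybar (Set.Iic 0) →
          (∃ K : ℝ, ∀ t ≤ (0:ℝ), ‖Ybar t‖ ≤ K) →
          (∀ t ≤ (0:ℝ), Ybar t = ∫ s in Set.Iic t, expOp B (t - s) (G X₀ (Ybar s) s)) →
          ‖(u 0).2 - Ybar 0‖ ≤ C * ε :=
  graphMap_approximation_general A B α β hβ hA hB F G Lf Lg hGc hFl hGl M hM lam hlam hlamα hgap
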